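/- arXiv:1101.3099 — 4 statements merged into one kernel-verified Lean document; each statement's English description precedes it below -/
import Mathlib

section
/- For every constant 0 < β < 1/(15·10⁴) there exists an integer n₀ = n₀(β) > 0 such that the following holds: if G₁ is an (n₁, d, β)-quasi-random graph on n₁ ≥ n₀ vertices with d ≥ ln n₁, then G₁ contains a spanning subgraph Γ which is a (βn₁, f_β)-expander and satisfies e(Γ) ≤ 10⁶·β·e(G₁). -/
open Filter Finset SimpleGraph
open scoped Classical

/-- The probability weight of a particular graph `G` on `[n]` under `G(n,p)`. -/
noncomputable def gnpWeight (n : ℕ) (p : ℝ) (G : SimpleGraph (Fin n)) : ℝ :=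
  p ^ G.edgeFinset.card * (1 - p) ^ (n.choose 2 - G.edgeFinset.card)

/-- The probability that a random graph `G ~ G(n,p)` satisfies the predicate `A`. -/
noncomputable def gnpProb (n : ℕ) (p : ℝ) (A : SimpleGraph (Fin n) → Prop) : ℝ :=
  ∑ G : SimpleGraph (Fin n), if A G then gnpWeight n p G else 0

/-- A sequence of graph properties holds with high probability in `G(n, p n)`. -/
def WHP (p : ℕ → ℝ) (A : ∀ n : ℕ, SimpleGraph (Fin n) → Prop) : Prop :=
  Tendsto (fun n => gnpProb n (p n) (A n)) atTop (nhds 1)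

/-- Number of edges of a graph. -/
noncomputable def edgeCount {V : Type*} [Fintype V] (G : SimpleGraph V) : ℕ :=
  G.edgeFinset.card

/-- Number of edges with both endpoints in `U`. -/
noncomputable def eIn {V : Type*} [Fintype V] (G : SimpleGraph V) (U : Finset V) : ℕ :=
  (G.edgeFinset.filter (fun e => ∀ v ∈ e, v ∈ U)).card

/-- Number of edges with one endpoint in `U` and the other in `Z` (for disjoint `U`, `Z`). -/
noncomputable def eBetween {V : Type*} [Fintype V] (G : SimpleGraph V) (U Z : Finset V) : ℕ :=
  ((U ×ˢ Z).filter (fun q => G.Adj q.1 q.2)).card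

/-- External neighbourhood of a vertex set. -/
noncomputable def extNbhd {V : Type*} [Fintype V] (G : SimpleGraph V) (U : Finset V) : Finset V :=
  Finset.univ.filter (fun v => v ∉ U ∧ ∃ u ∈ U, G.Adj u v)

/-- `G` is an `(R, f)`-expander: every set `U` with `|U| ≤ R` satisfies `|N(U)| ≥ f(|U|)·|U|`. -/
def IsExpander {V : Type*} [Fintype V] (G : SimpleGraph V) (R : ℝ) (f : ℕ → ℝ) : Prop :=
  ∀ U : Finset V, U.Nonempty → (U.card : ℝ) ≤ R →
    f U.card * U.card ≤ ((extNbhd G U).card : ℝ)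

/-- The expansion function `f_β` on `{1, …, ⌊β n₁⌋}`. -/
noncomputable def fBeta (β : ℝ) (n1 : ℕ) (t : ℕ) : ℝ :=
  if t = Nat.floor (β * n1) then 2 * (1 + 39 * β) / (3 * β)
  else if (t : ℝ) < (n1 : ℝ) ^ (0.1 : ℝ) then Real.log n1 ^ (0.8 : ℝ)
  else 11

/-- `G₁` is `(n₁, d, β)`-quasi-random. -/
def QuasiRandom {V : Type*} [Fintype V] (G1 : SimpleGraph V) (n1 : ℕ) (d β : ℝ) : Prop :=
  (∀ v : V, d / 150 ≤ (G1.degree v : ℝ)) ∧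
  (∀ U : Finset V, (U.card : ℝ) < (n1 : ℝ) ^ (0.11 : ℝ) * Real.log n1 →
    (eIn G1 U : ℝ) ≤ d ^ (0.13 : ℝ) * U.card) ∧
  (∀ U : Finset V, (U.card : ℝ) < 12 * β * n1 →
    (eIn G1 U : ℝ) ≤ 50 * β * d * U.card) ∧
  (∀ U Z : Finset V, Disjoint U Z → U.card = Nat.floor (β * n1) →
    Z.card = Nat.floor ((1 / 3 - 27 * β) * n1) →
    (n1 : ℝ) * Real.log (Real.log n1) ≤ (eBetween G1 U Z : ℝ))

/-- Longest path length in `G`. -/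
noncomputable def longestPath {V : Type*} [Fintype V] (G : SimpleGraph V) : ℕ :=
  sSup {l : ℕ | ∃ (u v : V) (q : G.Walk u v), q.IsPath ∧ q.length = l}

/-- `{u, v}` is a booster with respect to `Γ`. -/
def IsBooster {V : Type*} [Fintype V] (Γ : SimpleGraph V) (u v : V) : Prop :=
  u ≠ v ∧ ¬ Γ.Adj u v ∧
    ((Γ ⊔ fromEdgeSet {s(u, v)}).IsHamiltonian ∨
      longestPath Γ < longestPath (Γ ⊔ fromEdgeSet {s(u, v)}))

/-- The booster set `B_Γ(v)`. -/
noncomputable def boosterSet {V : Type*} [Fintype V] (Γ : SimpleGraph V) (v : V) : Finset V :=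
  Finset.univ.filter (fun w => IsBooster Γ v w)

/-- Membership in the family `𝓛(n, β)` with witnessing partition `V = V₁ ∪ D`. -/
def InFamilyL (n : ℕ) (β : ℝ) (G : SimpleGraph (Fin n)) (V1 D : Finset (Fin n)) : Prop :=
  Disjoint V1 D ∧ V1 ∪ D = Finset.univ ∧
  ((D.card : ℝ) ≤ (n : ℝ) ^ (0.09 : ℝ)) ∧
  (∀ u ∈ D, 2 ≤ (G.neighborFinset u ∩ V1).card) ∧
  (∀ u ∈ D, ∀ v ∈ D, ∀ q : G.Walk u v, q.IsPath → 0 < q.length →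
    2 * Real.log n / (3 * Real.log (Real.log n)) < (q.length : ℝ)) ∧
  (∀ u ∈ D, ∀ q : G.Walk u u, q.IsCycle →
    2 * Real.log n / (3 * Real.log (Real.log n)) < (q.length : ℝ)) ∧
  IsExpander (G.induce (V1 : Set (Fin n))) (β * V1.card) (fBeta β V1.card)

/-!
Every vertex keeps `D = ⌈1000βd⌉` of its edges. A set `U` with `|U| < βn₁` and few neighbours
cannot exist: counting degrees gives `e(U ∪ N(U)) + e(U) ≥ D|U|`, more than (P1), (P2) allow
for such small sets. A set with `|U| = ⌊βn₁⌋` and few neighbours would leave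
`(1/3 - 27β)n₁` vertices outside `U ∪ N(U)`, so it suffices to add edges meeting every
`E(U, Z)` of (P3). There are at most `4^{n₁}` such pairs, each containing `n₁ ln ln n₁` of the
`2e(G₁)` oriented edges, so a greedy hitting set of `≈ 4e(G₁) / ln ln n₁ ≤ βe(G₁)` edges exists,
while the kept edges number at most `n₁D ≤ 3·10⁵ βe(G₁)`.
-/

section HittingSet

variable {ι α : Type*} (A : ι → Finset α) (E : Finset α) {L : ℝ}

lemma one_sub_div_card_nonneg {B : Finset α} (hBE : B ⊆ E) (hB : L ≤ #B) : 0 ≤ 1 - L / #E :=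
  sub_nonneg.2 <|
    div_le_one_of_le₀ (hB.trans (by exact_mod_cast card_le_card hBE)) (by positivity)

variable [DecidableEq α]

lemma exists_le_card_filter_mem (hL : 0 < L) {s : Finset ι} (hs : s.Nonempty)
    (hA : ∀ i ∈ s, A i ⊆ E ∧ L ≤ #(A i)) :
    ∃ e ∈ E, L * #s / #E ≤ #{i ∈ s | e ∈ A i} := by
  obtain ⟨i, hi⟩ := hs
  have hE : (0 : ℝ) < #E := hL.trans_le <| (hA i hi).2.trans <| by
    exact_mod_cast card_le_card (hA i hi).1
  have hsum : ∑ i ∈ s, #(A i) = ∑ e ∈ E, #{i ∈ s | e ∈ A i} := by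
    have := sum_card_bipartiteAbove_eq_sum_card_bipartiteBelow (fun i e => e ∈ A i)
      (s := s) (t := E)
    simp only [bipartiteAbove, bipartiteBelow] at this
    rw [← this]
    refine sum_congr rfl fun i hi => congrArg card ?_
    exact (inter_eq_right.2 (hA i hi).1).symm.trans filter_mem_eq_inter.symm
  refine exists_le_of_sum_le (card_pos.1 (by exact_mod_cast hE)) ?_
  rw [sum_const, nsmul_eq_mul, mul_div_cancel₀ _ hE.ne', ← Nat.cast_sum, ← hsum, Nat.cast_sum,
    mul_comm, ← nsmul_eq_mul, ← sum_const]
  exact sum_le_sum fun i hi => (hA i hi).2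

/-- Pick greedily `k` elements, each lying in at least an `L / #E` fraction of the sets not yet
hit. -/
lemma exists_card_le_card_filter_disjoint_le (hL : 0 < L) (k : ℕ) (s : Finset ι)
    (hA : ∀ i ∈ s, A i ⊆ E ∧ L ≤ #(A i)) :
    ∃ T ⊆ E, #T ≤ k ∧ (#{i ∈ s | Disjoint (A i) T} : ℝ) ≤ #s * (1 - L / #E) ^ k := by
  induction k generalizing s with
  | zero => exact ⟨∅, empty_subset _, le_rfl, by simp⟩
  | succ k ih =>
    rcases s.eq_empty_or_nonempty with rfl | hs
    · exact ⟨∅, empty_subset _, Nat.zero_le _, by simp⟩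
    obtain ⟨e, he, hcount⟩ := exists_le_card_filter_mem A E hL hs hA
    obtain ⟨T, hTE, hTk, hT⟩ := ih {i ∈ s | e ∉ A i} fun i hi => hA i (mem_filter.1 hi).1
    refine ⟨insert e T, insert_subset he hTE, (card_insert_le _ _).trans (by omega), ?_⟩
    obtain ⟨i, hi⟩ := hs
    have hq := one_sub_div_card_nonneg E (hA i hi).1 (hA i hi).2
    have hmiss : (#{i ∈ s | e ∉ A i} : ℝ) ≤ #s * (1 - L / #E) := by
      have := card_filter_add_card_filter_not (s := s) (fun i => e ∈ A i)
      have : (#{i ∈ s | e ∈ A i} : ℝ) + #{i ∈ s | e ∉ A i} = #s := by exact_mod_cast this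
      have : (#s : ℝ) * (1 - L / #E) = #s - L * #s / #E := by ring
      linarith
    have hsub : {i ∈ s | Disjoint (A i) (insert e T)} ⊆
        {i ∈ {i ∈ s | e ∉ A i} | Disjoint (A i) T} := by
      intro j hj
      simp only [mem_filter, disjoint_insert_right] at hj ⊢
      exact ⟨⟨hj.1, hj.2.1⟩, hj.2.2⟩
    calc (#{i ∈ s | Disjoint (A i) (insert e T)} : ℝ)
        ≤ #{i ∈ {i ∈ s | e ∉ A i} | Disjoint (A i) T} := by exact_mod_cast card_le_card hsub
      _ ≤ #{i ∈ s | e ∉ A i} * (1 - L / #E) ^ k := hT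
      _ ≤ #s * (1 - L / #E) * (1 - L / #E) ^ k := by gcongr
      _ = #s * (1 - L / #E) ^ (k + 1) := by ring

lemma exists_card_le_forall_inter_nonempty (hL : 0 < L) (k : ℕ) (s : Finset ι)
    (hA : ∀ i ∈ s, A i ⊆ E ∧ L ≤ #(A i)) (hs : (#s : ℝ) < Real.exp (k * L / #E)) :
    ∃ T ⊆ E, #T ≤ k ∧ ∀ i ∈ s, (A i ∩ T).Nonempty := by
  obtain ⟨T, hTE, hTk, hT⟩ := exists_card_le_card_filter_disjoint_le A E hL k s hA
  refine ⟨T, hTE, hTk, fun i hi => ?_⟩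
  have hq := one_sub_div_card_nonneg E (hA i hi).1 (hA i hi).2
  have hmissed : (#{i ∈ s | Disjoint (A i) T} : ℝ) < 1 := by
    calc (#{i ∈ s | Disjoint (A i) T} : ℝ) ≤ #s * (1 - L / #E) ^ k := hT
      _ ≤ #s * Real.exp (-(L / #E)) ^ k := by
        gcongr
        exact Real.one_sub_le_exp_neg _
      _ = #s / Real.exp (k * L / #E) := by
        rw [← Real.exp_nat_mul, div_eq_mul_inv (#s : ℝ), ← Real.exp_neg]
        ring_nf
      _ < 1 := (div_lt_one (Real.exp_pos _)).2 hs
  have hempty : {i ∈ s | Disjoint (A i) T} = ∅ :=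
    card_eq_zero.1 (Nat.lt_one_iff.1 (by exact_mod_cast hmissed))
  rw [← not_disjoint_iff_nonempty_inter]
  exact fun hdisj => notMem_empty i (hempty ▸ mem_filter.2 ⟨hi, hdisj⟩)

end HittingSet

section Graph

variable {V : Type*}

lemma fromRel_le_of_forall_mem {G : SimpleGraph V} {T : Finset (V × V)}
    (hT : ∀ q ∈ T, G.Adj q.1 q.2) : fromRel (fun a b => (a, b) ∈ T) ≤ G := fun a b hab => by
  rcases ((fromRel_adj _ a b).1 hab).2 with h | h
  exacts [hT _ h, (hT _ h).symm]

variable [Fintype V]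

lemma edgeCount_le_of_forall_adj (H : SimpleGraph V) (T : Finset (V × V))
    (hT : ∀ a b, H.Adj a b → (a, b) ∈ T ∨ (b, a) ∈ T) : edgeCount H ≤ #T := by
  refine (card_le_card fun e he => ?_).trans (card_image_le (f := fun q : V × V => s(q.1, q.2)))
  induction e using Sym2.ind with
  | _ a b =>
    rcases hT a b (mem_edgeFinset.1 he) with h | h
    · exact mem_image.2 ⟨_, h, rfl⟩
    · exact mem_image.2 ⟨_, h, Sym2.eq_swap⟩

lemma edgeCount_fromRel_le (T : Finset (V × V)) :
    edgeCount (fromRel fun a b => (a, b) ∈ T) ≤ #T :=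
  edgeCount_le_of_forall_adj _ T fun a b hab => ((fromRel_adj _ a b).1 hab).2

lemma card_le_degree_of_forall_adj {H : SimpleGraph V} {v : V} {S : Finset V}
    (hS : ∀ u ∈ S, H.Adj v u) : #S ≤ H.degree v := by
  rw [← card_neighborFinset_eq_degree]
  exact card_le_card fun u hu => (mem_neighborFinset _ _ _).2 (hS u hu)

lemma card_filter_adj_eq_two_mul_edgeCount (G : SimpleGraph V) :
    #{q : V × V | G.Adj q.1 q.2} = 2 * edgeCount G := by
  rw [edgeCount, ← dart_card_eq_twice_card_edges, ← Fintype.card_subtype]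
  exact Fintype.card_congr
    { toFun := fun q => ⟨q.1, q.2⟩, invFun := fun d => ⟨d.toProd, d.adj⟩,
      left_inv := fun _ => rfl, right_inv := fun _ => rfl }

lemma edgeCount_sup_le (H H' : SimpleGraph V) :
    edgeCount (H ⊔ H') ≤ edgeCount H + edgeCount H' := by
  simp only [edgeCount, edgeFinset_sup]
  exact card_union_le _ _

lemma card_mul_le_two_mul_edgeCount (G : SimpleGraph V) {δ : ℝ}
    (hδ : ∀ v, δ ≤ G.degree v) :
    Fintype.card V * δ ≤ 2 * edgeCount G :=
  calc (Fintype.card V : ℝ) * δ = ∑ _v : V, δ := by rw [sum_const, card_univ, nsmul_eq_mul]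
    _ ≤ ∑ v, (G.degree v : ℝ) := sum_le_sum fun v _ => hδ v
    _ = 2 * edgeCount G := by exact_mod_cast sum_degrees_eq_twice_card_edges G

lemma exists_le_forall_degree_ge_edgeCount_le (G : SimpleGraph V) {D : ℕ}
    (hD : ∀ v, D ≤ G.degree v) :
    ∃ H ≤ G, (∀ v, D ≤ H.degree v) ∧ edgeCount H ≤ Fintype.card V * D := by
  choose S hSG hS using fun v =>
    exists_subset_card_eq ((card_neighborFinset_eq_degree G v).ge.trans' (hD v))
  set T : Finset (V × V) := univ.biUnion fun v => (S v).image (Prod.mk v)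
  have hT : ∀ v, ∀ u ∈ S v, (v, u) ∈ T := fun v u hu =>
    mem_biUnion.2 ⟨v, mem_univ v, mem_image_of_mem _ hu⟩
  refine ⟨fromRel fun a b => (a, b) ∈ T, fromRel_le_of_forall_mem ?_, fun v => ?_, ?_⟩
  · intro q hq
    obtain ⟨v, -, hq⟩ := mem_biUnion.1 hq
    obtain ⟨u, hu, rfl⟩ := mem_image.1 hq
    exact (mem_neighborFinset _ _ _).1 (hSG v hu)
  · refine (hS v).ge.trans (card_le_degree_of_forall_adj fun u hu => (fromRel_adj _ _ _).2 ?_)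
    exact ⟨((mem_neighborFinset _ _ _).1 (hSG v hu)).ne, Or.inl (hT v u hu)⟩
  · calc edgeCount _ ≤ #T := edgeCount_fromRel_le T
      _ ≤ ∑ v, #((S v).image (Prod.mk v)) := card_biUnion_le
      _ ≤ ∑ _v : V, D := sum_le_sum fun v _ => card_image_le.trans (hS v).le
      _ = Fintype.card V * D := by rw [sum_const, card_univ, smul_eq_mul]

lemma exists_le_edgeCount_le_forall_exists_adj (G : SimpleGraph V)
    (s : Finset (Finset V × Finset V)) {L : ℝ} (hL : 0 < L)
    (hs : ∀ p ∈ s, L ≤ eBetween G p.1 p.2) (k : ℕ)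
    (hk : (#s : ℝ) < Real.exp (k * L / (2 * edgeCount G))) :
    ∃ H ≤ G, edgeCount H ≤ k ∧ ∀ p ∈ s, ∃ u ∈ p.1, ∃ v ∈ p.2, H.Adj u v := by
  set E : Finset (V × V) := {q | G.Adj q.1 q.2}
  have hE : (#E : ℝ) = 2 * edgeCount G := by
    exact_mod_cast card_filter_adj_eq_two_mul_edgeCount G
  obtain ⟨T, hTE, hTk, hT⟩ := exists_card_le_forall_inter_nonempty
    (fun p : Finset V × Finset V => {q ∈ p.1 ×ˢ p.2 | G.Adj q.1 q.2}) E hL k s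
    (fun p hp => ⟨fun q hq => mem_filter.2 ⟨mem_univ q, (mem_filter.1 hq).2⟩,
      by exact hs p hp⟩)
    (hE ▸ hk)
  refine ⟨fromRel fun a b => (a, b) ∈ T,
    fromRel_le_of_forall_mem fun q hq => (mem_filter.1 (hTE hq)).2,
    (edgeCount_fromRel_le T).trans hTk, fun p hp => ?_⟩
  obtain ⟨q, hq⟩ := hT p hp
  obtain ⟨hqp, hqT⟩ := mem_inter.1 hq
  obtain ⟨hq12, hadj⟩ := mem_filter.1 hqp
  obtain ⟨hq1, hq2⟩ := mem_product.1 hq12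
  exact ⟨q.1, hq1, q.2, hq2, (fromRel_adj _ _ _).2 ⟨hadj.ne, Or.inl hqT⟩⟩

end Graph

section Expansion

variable {V : Type*} [Fintype V]

lemma mem_extNbhd {H : SimpleGraph V} {U : Finset V} {v : V} :
    v ∈ extNbhd H U ↔ v ∉ U ∧ ∃ u ∈ U, H.Adj u v := by
  simp [extNbhd]

lemma card_filter_mem_le_of_adj (H : SimpleGraph V) (U : Finset V) {a b : V}
    (hab : H.Adj a b) :
    #{u ∈ U | u ∈ s(a, b)} ≤ (if ∀ v ∈ s(a, b), v ∈ U ∪ extNbhd H U then 1 else 0) +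
      (if ∀ v ∈ s(a, b), v ∈ U then 1 else 0) := by
  have hsub : {u ∈ U | u ∈ s(a, b)} ⊆ {u ∈ ({a, b} : Finset V) | u ∈ U} := fun u hu => by
    simp only [mem_filter, Sym2.mem_iff, mem_insert, mem_singleton] at hu ⊢
    exact ⟨hu.2, hu.1⟩
  refine (card_le_card hsub).trans ?_
  by_cases ha : a ∈ U <;> by_cases hb : b ∈ U
  · simpa [ha, hb] using (card_filter_le _ _).trans card_le_two
  · simp [ha, hb, mem_extNbhd.2 ⟨hb, a, ha, hab⟩, filter_insert, filter_singleton]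
  · simp [ha, hb, mem_extNbhd.2 ⟨ha, b, hb, hab.symm⟩, filter_insert, filter_singleton]
  · simp [ha, hb, filter_insert, filter_singleton]

lemma sum_degree_le_eIn_add_eIn (H : SimpleGraph V) (U : Finset V) :
    ∑ u ∈ U, H.degree u ≤ eIn H (U ∪ extNbhd H U) + eIn H U := by
  have hdc := sum_card_bipartiteAbove_eq_sum_card_bipartiteBelow (fun u (e : Sym2 V) => u ∈ e)
    (s := U) (t := H.edgeFinset)
  simp only [bipartiteAbove, bipartiteBelow] at hdc
  simp only [← card_incidenceFinset_eq_degree, incidenceFinset_eq_filter]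
  rw [hdc, eIn, eIn, card_filter, card_filter, ← sum_add_distrib]
  exact sum_le_sum fun e he => by
    induction e using Sym2.ind with
    | _ a b => exact card_filter_mem_le_of_adj H U (mem_edgeFinset.1 he)

lemma eIn_mono {H H' : SimpleGraph V} (h : H ≤ H') (W : Finset V) : eIn H W ≤ eIn H' W :=
  card_le_card (filter_subset_filter _ (edgeFinset_subset_edgeFinset.2 h))

variable {G Γ : SimpleGraph V} {D : ℕ}

lemma card_mul_le_eIn_add_eIn (hΓ : Γ ≤ G) (hD : ∀ v, D ≤ Γ.degree v) (U : Finset V) :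
    #U * D ≤ eIn G (U ∪ extNbhd Γ U) + eIn G U :=
  calc #U * D = ∑ _u ∈ U, D := by rw [sum_const, smul_eq_mul]
    _ ≤ ∑ u ∈ U, Γ.degree u := sum_le_sum fun u _ => hD u
    _ ≤ eIn Γ (U ∪ extNbhd Γ U) + eIn Γ U := sum_degree_le_eIn_add_eIn Γ U
    _ ≤ _ := add_le_add (eIn_mono hΓ _) (eIn_mono hΓ _)

lemma le_card_extNbhd_of_eIn_le (hΓ : Γ ≤ G) (hD : ∀ v, D ≤ Γ.degree v) {U : Finset V}
    (hU : U.Nonempty) {a f : ℝ} (ha : 0 < a) (hDa : a * (2 + f) ≤ D)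
    (hsparse : ∀ W, U ⊆ W → (#W : ℝ) < (1 + f) * #U → (eIn G W : ℝ) ≤ a * #W) :
    f * #U ≤ #(extNbhd Γ U) := by
  by_contra! hlt
  have hU0 : (0 : ℝ) < #U := by exact_mod_cast hU.card_pos
  set W := U ∪ extNbhd Γ U
  have hW : (#W : ℝ) < (1 + f) * #U := by
    have : (#W : ℝ) ≤ #U + #(extNbhd Γ U) := by exact_mod_cast card_union_le _ _
    linarith
  have hcore : (#U * D : ℝ) ≤ eIn G W + eIn G U := by
    exact_mod_cast card_mul_le_eIn_add_eIn hΓ hD U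
  have hWsparse := hsparse W subset_union_left hW
  have hUsparse := hsparse U subset_rfl (by linarith)
  nlinarith [mul_lt_mul_of_pos_left hW ha, mul_le_mul_of_nonneg_right hDa hU0.le]

variable {n : ℕ} {d : ℝ}

lemma log_rpow_mul_le_card_extNbhd (hΓ : Γ ≤ G) (hD : ∀ v, D ≤ Γ.degree v) (hd : 0 < d)
    (hsparse : ∀ U : Finset V, (#U : ℝ) < n ^ (0.11 : ℝ) * Real.log n →
      (eIn G U : ℝ) ≤ d ^ (0.13 : ℝ) * #U)
    (hlog : 1 ≤ Real.log n) (hn : 2 ≤ (n : ℝ) ^ (0.01 : ℝ))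
    (hDd : d ^ (0.13 : ℝ) * (2 + Real.log n ^ (0.8 : ℝ)) ≤ D)
    {U : Finset V} (hU : U.Nonempty) (hUn : (#U : ℝ) < n ^ (0.1 : ℝ)) :
    Real.log n ^ (0.8 : ℝ) * #U ≤ #(extNbhd Γ U) := by
  have hn0 : (0 : ℝ) ≤ n := Nat.cast_nonneg n
  have hlog08 : Real.log n ^ (0.8 : ℝ) ≤ Real.log n :=
    Real.rpow_le_self_of_one_le hlog (by norm_num)
  refine le_card_extNbhd_of_eIn_le hΓ hD hU (by positivity) hDd
    fun W _ hW => hsparse W ?_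
  calc (#W : ℝ) < (1 + Real.log n ^ (0.8 : ℝ)) * #U := hW
    _ ≤ (1 + Real.log n ^ (0.8 : ℝ)) * n ^ (0.1 : ℝ) := by gcongr
    _ ≤ (2 * Real.log n) * n ^ (0.1 : ℝ) := by gcongr; linarith
    _ ≤ (n ^ (0.01 : ℝ) * Real.log n) * n ^ (0.1 : ℝ) := by gcongr
    _ = n ^ (0.11 : ℝ) * Real.log n := by
      rw [mul_right_comm, ← Real.rpow_add' hn0 (by norm_num)]
      norm_num

lemma eleven_mul_le_card_extNbhd {β : ℝ} (hΓ : Γ ≤ G) (hD : ∀ v, D ≤ Γ.degree v)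
    (hβd : 0 < β * d)
    (hsparse : ∀ U : Finset V, (#U : ℝ) < 12 * β * n → (eIn G U : ℝ) ≤ 50 * β * d * #U)
    (hDd : 650 * β * d ≤ D) {U : Finset V} (hU : U.Nonempty) (hUn : (#U : ℝ) ≤ β * n) :
    11 * (#U : ℝ) ≤ #(extNbhd Γ U) :=
  le_card_extNbhd_of_eIn_le (a := 50 * β * d) (f := 11) hΓ hD hU (by linarith) (by linarith)
    fun W _ hW => hsparse W (by linarith)

end Expansion

section Expander

variable {n : ℕ} {d β : ℝ} {G Γ : SimpleGraph (Fin n)} {D : ℕ}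

lemma le_card_extNbhd_of_card_eq_floor (hβ0 : 0 < β) (hβ : 27 * β ≤ 1 / 3)
    (hadj : ∀ U Z : Finset (Fin n), Disjoint U Z → #U = ⌊β * n⌋₊ →
      #Z = ⌊(1 / 3 - 27 * β) * n⌋₊ → ∃ u ∈ U, ∃ v ∈ Z, Γ.Adj u v)
    {U : Finset (Fin n)} (hU : #U = ⌊β * n⌋₊) :
    2 * (1 + 39 * β) / (3 * β) * #U ≤ #(extNbhd Γ U) := by
  by_contra! hlt
  have hUn : (#U : ℝ) ≤ β * n := hU ▸ Nat.floor_le (by positivity)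
  set R := univ \ (U ∪ extNbhd Γ U)
  have hR : (#R : ℝ) + #U + #(extNbhd Γ U) ≥ n := by
    have h1 : #R + #(U ∪ extNbhd Γ U) = n := by
      rw [card_sdiff_add_card_eq_card (subset_univ _), card_univ, Fintype.card_fin]
    have h2 := card_union_le U (extNbhd Γ U)
    exact_mod_cast (by omega : #R + #U + #(extNbhd Γ U) ≥ n)
  have hc : 2 * (1 + 39 * β) / (3 * β) * (β * n) = (2 / 3 + 26 * β) * n := by
    field_simp
    ring
  have hzR : ⌊(1 / 3 - 27 * β) * n⌋₊ ≤ #R := by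
    have : (1 / 3 - 27 * β) * n < #R := by
      nlinarith [mul_le_mul_of_nonneg_left hUn (by positivity : 0 ≤ 2 * (1 + 39 * β) / (3 * β))]
    exact_mod_cast (Nat.floor_le (by nlinarith [Nat.cast_nonneg (α := ℝ) n])).trans this.le
  obtain ⟨Z, hZR, hZ⟩ := exists_subset_card_eq hzR
  have hZ' : ∀ v ∈ Z, v ∉ U ∧ v ∉ extNbhd Γ U := fun v hv => by
    simpa [R, not_or] using hZR hv
  obtain ⟨u, hu, v, hv, huv⟩ :=
    hadj U Z (disjoint_right.2 fun v hv => (hZ' v hv).1) hU hZ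
  exact (hZ' v hv).2 (mem_extNbhd.2 ⟨(hZ' v hv).1, u, hu, huv⟩)

lemma QuasiRandom.isExpander_fBeta (hG : QuasiRandom G n d β) (hβ0 : 0 < β)
    (hβ : 27 * β ≤ 1 / 3) (hΓ : Γ ≤ G) (hD : ∀ v, D ≤ Γ.degree v) (hd : 0 < d)
    (hlog : 1 ≤ Real.log n)
    (hn : 2 ≤ (n : ℝ) ^ (0.01 : ℝ)) (hDd : 1000 * β * d ≤ D)
    (hsmall : d ^ (0.13 : ℝ) * (2 + Real.log n ^ (0.8 : ℝ)) ≤ 1000 * β * d)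
    (hadj : ∀ U Z : Finset (Fin n), Disjoint U Z → #U = ⌊β * n⌋₊ →
      #Z = ⌊(1 / 3 - 27 * β) * n⌋₊ → ∃ u ∈ U, ∃ v ∈ Z, Γ.Adj u v) :
    IsExpander Γ (β * n) (fBeta β n) := by
  obtain ⟨-, hP1, hP2, -⟩ := hG
  intro U hU hUn
  unfold fBeta
  split_ifs with hfloor hsmallU
  · exact le_card_extNbhd_of_card_eq_floor hβ0 hβ hadj hfloor
  · exact log_rpow_mul_le_card_extNbhd hΓ hD hd hP1 hlog hn (hsmall.trans hDd) hU hsmallU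
  · exact eleven_mul_le_card_extNbhd hΓ hD (by positivity) hP2 (by linarith) hU hUn

lemma QuasiRandom.exists_le_edgeCount_le_forall_card_eq_floor (hG : QuasiRandom G n d β)
    (hβ0 : 0 < β) (hn : 0 < n) (hloglog : 4 ≤ β * Real.log (Real.log n))
    (he : 0 < edgeCount G) :
    ∃ H ≤ G, (edgeCount H : ℝ) ≤ β * edgeCount G + 1 ∧
      ∀ U Z : Finset (Fin n), Disjoint U Z → #U = ⌊β * n⌋₊ →
        #Z = ⌊(1 / 3 - 27 * β) * n⌋₊ → ∃ u ∈ U, ∃ v ∈ Z, H.Adj u v := by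
  obtain ⟨-, -, -, hP3⟩ := hG
  have he0 : (0 : ℝ) < edgeCount G := by exact_mod_cast he
  set e : ℝ := (edgeCount G : ℝ)
  set ℓ := Real.log (Real.log n)
  have hℓ : 0 < ℓ := pos_of_mul_pos_right (by linarith : 0 < β * ℓ) hβ0.le
  set s : Finset (Finset (Fin n) × Finset (Fin n)) :=
    {p | Disjoint p.1 p.2 ∧ #p.1 = ⌊β * n⌋₊ ∧ #p.2 = ⌊(1 / 3 - 27 * β) * n⌋₊}
  set k := ⌊4 * e / ℓ⌋₊ + 1
  have hk : 4 * e / ℓ < k := by simpa [k] using Nat.lt_floor_add_one (4 * e / ℓ)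
  have hs : (#s : ℝ) < Real.exp (k * (n * ℓ) / (2 * e)) :=
    calc (#s : ℝ) ≤ 4 ^ n := by
          have := card_le_univ s
          rw [Fintype.card_prod, Fintype.card_finset, Fintype.card_fin, ← mul_pow] at this
          exact_mod_cast this
      _ ≤ Real.exp 2 ^ n := by
          gcongr
          linarith [Real.quadratic_le_exp_of_nonneg (x := 2) (by norm_num)]
      _ = Real.exp (2 * n) := by rw [← Real.exp_nat_mul, mul_comm]
      _ < Real.exp (k * (n * ℓ) / (2 * e)) := by
          rw [Real.exp_lt_exp, lt_div_iff₀ (by positivity)]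
          rw [div_lt_iff₀ hℓ] at hk
          have : (0 : ℝ) < n := by exact_mod_cast hn
          nlinarith
  obtain ⟨H, hHG, hHk, hH⟩ := exists_le_edgeCount_le_forall_exists_adj G s (L := n * ℓ)
    (by positivity) (fun p hp => (mem_filter.1 hp).2.elim fun h1 h2 => hP3 _ _ h1 h2.1 h2.2)
    k hs
  refine ⟨H, hHG, ?_, fun U Z hUZ hU hZ => hH (U, Z) (by simp [s, hUZ, hU, hZ])⟩
  calc (edgeCount H : ℝ) ≤ k := by exact_mod_cast hHk
    _ ≤ 4 * e / ℓ + 1 := by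
        push_cast [k]
        gcongr
        exact Nat.floor_le (by positivity)
    _ ≤ β * e + 1 := by
        gcongr
        rw [div_le_iff₀ hℓ]
        nlinarith

end Expander

lemma eventually_log_bounds {β : ℝ} (hβ0 : 0 < β) (hβ : β < 1 / (15 * 10 ^ 4)) :
    ∀ᶠ n : ℕ in atTop, 300 ≤ n ∧ 2 ≤ (n : ℝ) ^ (0.01 : ℝ) ∧ 1 ≤ β * Real.log n ∧
      1 ≤ (1 / 150 - 1000 * β) * Real.log n ∧
      2 + Real.log n ^ (0.8 : ℝ) ≤ 1000 * β * Real.log n ^ (0.87 : ℝ) ∧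
      4 ≤ β * Real.log (Real.log n) := by
  have hn : Tendsto (fun n : ℕ => (n : ℝ)) atTop atTop := tendsto_natCast_atTop_atTop
  have hlog : Tendsto (fun n : ℕ => Real.log n) atTop atTop := Real.tendsto_log_atTop.comp hn
  have hrpow {r : ℝ} (hr : 0 < r) : Tendsto (fun n : ℕ => Real.log n ^ r) atTop atTop :=
    (tendsto_rpow_atTop hr).comp hlog
  filter_upwards [eventually_ge_atTop 300,
    ((tendsto_rpow_atTop (by norm_num : (0 : ℝ) < 0.01)).comp hn).eventually_ge_atTop 2,
    (hlog.const_mul_atTop hβ0).eventually_ge_atTop 1,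
    (hlog.const_mul_atTop (by linarith : 0 < 1 / 150 - 1000 * β)).eventually_ge_atTop 1,
    (hrpow (by norm_num : (0 : ℝ) < 0.8)).eventually_ge_atTop 2,
    ((hrpow (by norm_num : (0 : ℝ) < 0.07)).const_mul_atTop
      (by positivity : (0 : ℝ) < 500 * β)).eventually_ge_atTop 1,
    ((Real.tendsto_log_atTop.comp hlog).const_mul_atTop hβ0).eventually_ge_atTop 4,
    hlog.eventually_gt_atTop 0] with n h300 h001 h1 h2 h08 h007 hll hpos
  refine ⟨h300, h001, h1, h2, ?_, hll⟩
  have : Real.log n ^ (0.87 : ℝ) = Real.log n ^ (0.8 : ℝ) * Real.log n ^ (0.07 : ℝ) := by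
    rw [← Real.rpow_add hpos]
    norm_num
  rw [this]
  nlinarith

lemma QuasiRandom.exists_le_isExpander_edgeCount_le {n : ℕ} {d β : ℝ}
    {G : SimpleGraph (Fin n)} (hG : QuasiRandom G n d β) (hβ0 : 0 < β)
    (hβ : β < 1 / (15 * 10 ^ 4)) (h300 : 300 ≤ n) (hn : 2 ≤ (n : ℝ) ^ (0.01 : ℝ))
    (hβlog : 1 ≤ β * Real.log n) (hεlog : 1 ≤ (1 / 150 - 1000 * β) * Real.log n)
    (hsmall : 2 + Real.log n ^ (0.8 : ℝ) ≤ 1000 * β * Real.log n ^ (0.87 : ℝ))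
    (hloglog : 4 ≤ β * Real.log (Real.log n)) (hd : Real.log n ≤ d) :
    ∃ Γ ≤ G, IsExpander Γ (β * n) (fBeta β n) ∧
      (edgeCount Γ : ℝ) ≤ 10 ^ 6 * β * edgeCount G := by
  have hlog : 0 < Real.log n := pos_of_mul_pos_right (by linarith) hβ0.le
  have hd0 : 0 < d := hlog.trans_le hd
  have hβd : 1 ≤ β * d := hβlog.trans (by gcongr)
  have hnd : (n : ℝ) * (d / 150) ≤ 2 * edgeCount G := by
    simpa using card_mul_le_two_mul_edgeCount G hG.1
  set D := ⌈1000 * β * d⌉₊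
  have hD : (D : ℝ) ≤ 1000 * β * d + 1 := (Nat.ceil_lt_add_one (by positivity)).le
  have hDdeg : ∀ v, (D : ℝ) ≤ G.degree v := fun v => by nlinarith [hG.1 v]
  obtain ⟨Γ1, hΓ1, hdeg, hΓ1e⟩ :=
    exists_le_forall_degree_ge_edgeCount_le G (D := D) fun v => by exact_mod_cast hDdeg v
  have h300R : (300 : ℝ) ≤ n := by exact_mod_cast h300
  have he : (0 : ℝ) < edgeCount G := by nlinarith
  obtain ⟨Γ2, hΓ2, hΓ2e, hadj⟩ :=
    hG.exists_le_edgeCount_le_forall_card_eq_floor hβ0 (by omega) hloglog (by exact_mod_cast he)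
  have hrpow : d ^ (0.13 : ℝ) * (2 + Real.log n ^ (0.8 : ℝ)) ≤ 1000 * β * d :=
    calc d ^ (0.13 : ℝ) * (2 + Real.log n ^ (0.8 : ℝ))
        ≤ d ^ (0.13 : ℝ) * (1000 * β * d ^ (0.87 : ℝ)) := by
          gcongr
          exact hsmall.trans (by gcongr)
      _ = 1000 * β * d := by
        rw [mul_left_comm, ← Real.rpow_add hd0]
        norm_num
  -- `convert` reconciles the two decidability instances of `(Γ1 ⊔ Γ2).Adj`.
  refine ⟨Γ1 ⊔ Γ2, sup_le hΓ1 hΓ2, hG.isExpander_fBeta hβ0 (by linarith) (sup_le hΓ1 hΓ2)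
    (fun v => (hdeg v).trans (by convert degree_le_of_le (le_sup_left (b := Γ2))))
    hd0 (by nlinarith) hn (Nat.le_ceil _) hrpow fun U Z hUZ hU hZ => ?_, ?_⟩
  · obtain ⟨u, hu, v, hv, huv⟩ := hadj U Z hUZ hU hZ
    exact ⟨u, hu, v, hv, le_sup_right (a := Γ1) huv⟩
  have hΓ1e' : (edgeCount Γ1 : ℝ) ≤ n * D := by exact_mod_cast (Fintype.card_fin n) ▸ hΓ1e
  calc (edgeCount (Γ1 ⊔ Γ2) : ℝ) ≤ edgeCount Γ1 + edgeCount Γ2 := by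
        exact_mod_cast edgeCount_sup_le Γ1 Γ2
    _ ≤ n * D + (β * edgeCount G + 1) := add_le_add hΓ1e' hΓ2e
    _ ≤ 10 ^ 6 * β * edgeCount G := by nlinarith

/-- Lemma 3.2: every `(n₁, d, β)`-quasi-random graph with `d ≥ ln n₁` contains a
`(β n₁, f_β)`-expander spanning subgraph with at most `10⁶ β e(G₁)` edges. -/
theorem stmt4 (β : ℝ) (hβ0 : 0 < β) (hβ : β < 1 / (15 * 10 ^ 4)) :
    ∃ n0 : ℕ, 0 < n0 ∧ ∀ n1 : ℕ, n0 ≤ n1 → ∀ d : ℝ, Real.log n1 ≤ d →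
      ∀ G1 : SimpleGraph (Fin n1), QuasiRandom G1 n1 d β →
        ∃ Γ : SimpleGraph (Fin n1), Γ ≤ G1 ∧ IsExpander Γ (β * n1) (fBeta β n1) ∧
          (edgeCount Γ : ℝ) ≤ 10 ^ 6 * β * (edgeCount G1 : ℝ) := by
  obtain ⟨n0, hn0⟩ := eventually_atTop.1 (eventually_log_bounds hβ0 hβ)
  refine ⟨n0 + 1, n0.succ_pos, fun n1 hn1 d hd G1 hG1 => ?_⟩
  obtain ⟨h300, hn, hβlog, hεlog, hsmall, hloglog⟩ := hn0 n1 (by omega)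
  exact hG1.exists_le_isExpander_edgeCount_le hβ0 hβ h300 hn hβlog hεlog hsmall hloglog hd
end

section
/- Let G = (V,E) be a graph on n vertices and let H ⊆ G be a spanning subgraph. Suppose there exists a spanning subgraph Γ ⊆ G − H such that for every edge set E' ⊆ E(G − H − Γ) of cardinality |E'| ≤ n there exists a vertex v ∈ V (which may depend on E') satisfying |N_{G−(Γ+E')}(v) ∩ B_{Γ+E'}(v)| > d_H(v). Then G − H is Hamiltonian. -/
open Filter Finset SimpleGraph
open scoped Classical

/-!
Each booster edge added to `Γ` either closes a Hamilton cycle or lengthens a longest path.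
Starting from `E' = ∅` and always adding a booster edge of `G - H`, the invariant
`|E'| ≤ longestPath (Γ + E') < n` is kept until a Hamilton cycle inside `G - H` appears, which
must happen after fewer than `n` steps. The degree condition guarantees such an edge:
more than `d_H(v)` booster neighbours of `v` in `G - (Γ + E')` cannot all be `H`-neighbours.
-/

namespace SimpleGraph

variable {V : Type*}

lemma sup_fromEdgeSet_insert (Γ : SimpleGraph V) (e : Sym2 V) (s : Set (Sym2 V)) :
    Γ ⊔ fromEdgeSet (insert e s) = Γ ⊔ fromEdgeSet s ⊔ fromEdgeSet {e} := by
  rw [Set.insert_eq, fromEdgeSet_union, sup_comm (fromEdgeSet {e}), sup_assoc]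

variable [Fintype V]

lemma longestPath_lt_card [Nonempty V] (G : SimpleGraph V) : longestPath G < Fintype.card V := by
  have hne : {l | ∃ (u v : V) (q : G.Walk u v), q.IsPath ∧ q.length = l}.Nonempty :=
    ⟨0, Classical.arbitrary V, _, .nil, .nil, rfl⟩
  refine (csSup_le hne ?_).trans_lt (Nat.sub_lt Fintype.card_pos one_pos)
  rintro l ⟨u, v, q, hq, rfl⟩
  have := hq.length_lt
  omega

theorem isHamiltonian_of_forall_exists_booster {K Γ : SimpleGraph V}
    (hΓ : Γ ≤ K)
    (h : ∀ E : Finset (Sym2 V), (E : Set (Sym2 V)) ⊆ (K \ Γ).edgeSet →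
      E.card ≤ Fintype.card V →
      ∃ v w, s(v, w) ∈ (K \ Γ).edgeSet ∧ IsBooster (Γ ⊔ fromEdgeSet E) v w) :
    K.IsHamiltonian := by
  obtain ⟨v₀, -⟩ := h ∅ (by simp) (by simp)
  have : Nonempty V := ⟨v₀⟩
  suffices key : ∀ k, ∀ E : Finset (Sym2 V), (E : Set (Sym2 V)) ⊆ (K \ Γ).edgeSet →
      E.card ≤ longestPath (Γ ⊔ fromEdgeSet E) →
      Fintype.card V ≤ longestPath (Γ ⊔ fromEdgeSet E) + k → K.IsHamiltonian from
    key _ ∅ (by simp) (by simp) le_add_self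
  intro k
  induction k with
  | zero => exact fun E _ _ hk ↦ absurd hk (longestPath_lt_card _).not_ge
  | succ k ih =>
    intro E hE hcard hk
    obtain ⟨v, w, hvw, hne, hadj, hboost⟩ :=
      h E hE (hcard.trans (longestPath_lt_card _).le)
    have hgraph := sup_fromEdgeSet_insert Γ s(v, w) E
    rw [← Finset.coe_insert] at hgraph
    have hE' : (↑(insert s(v, w) E) : Set (Sym2 V)) ⊆ (K \ Γ).edgeSet := by
      rw [Finset.coe_insert]
      exact Set.insert_subset hvw hE
    rcases hboost with hham | hlong
    · have hle : Γ ⊔ fromEdgeSet ↑(insert s(v, w) E) ≤ K := sup_le hΓ <|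
        (fromEdgeSet_le _).2 (Set.sdiff_subset.trans (hE'.trans (edgeSet_mono sdiff_le)))
      exact (hgraph ▸ hham).mono hle
    · have hnotin : s(v, w) ∉ E := fun hmem ↦
        hadj (Or.inr ((fromEdgeSet_adj _).2 ⟨hmem, hne⟩))
      rw [← hgraph] at hlong
      refine ih (insert s(v, w) E) hE' ?_ (by omega)
      rw [Finset.card_insert_of_notMem hnotin]
      omega

lemma exists_booster_of_degree_lt {G H Γ Γ' : SimpleGraph V} (hΓ : Γ ≤ Γ') {v : V}
    (hv : H.degree v < #((G \ Γ').neighborFinset v ∩ boosterSet Γ' v)) :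
    ∃ w, s(v, w) ∈ ((G \ H) \ Γ).edgeSet ∧ IsBooster Γ' v w := by
  set S := (G \ Γ').neighborFinset v ∩ boosterSet Γ' v
  obtain ⟨w, hw⟩ : (S \ H.neighborFinset v).Nonempty := by
    rw [← Finset.card_pos]
    have := Finset.le_card_sdiff (H.neighborFinset v) S
    rw [card_neighborFinset_eq_degree] at this
    omega
  simp only [S, Finset.mem_sdiff, Finset.mem_inter, mem_neighborFinset, sdiff_adj, boosterSet,
    Finset.mem_filter, Finset.mem_univ, true_and] at hw
  obtain ⟨⟨⟨hG, hΓ'⟩, hB⟩, hH⟩ := hw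
  exact ⟨w, ⟨⟨hG, hH⟩, fun h ↦ hΓ' (hΓ h)⟩, hB⟩

end SimpleGraph

theorem stmt5_general {n : ℕ} (G H Γ : SimpleGraph (Fin n)) (hΓ : Γ ≤ G \ H)
    (hyp : ∀ E' : Finset (Sym2 (Fin n)),
      (E' : Set (Sym2 (Fin n))) ⊆ ((G \ H) \ Γ).edgeSet → E'.card ≤ n →
      ∃ v : Fin n, H.degree v <
        (((G \ (Γ ⊔ fromEdgeSet (E' : Set (Sym2 (Fin n))))).neighborFinset v) ∩
          boosterSet (Γ ⊔ fromEdgeSet (E' : Set (Sym2 (Fin n)))) v).card) :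
    (G \ H).IsHamiltonian := by
  -- `convert` reconciles the classical decidability instances of the lemmas with those of `Fin n`.
  convert isHamiltonian_of_forall_exists_booster hΓ fun E' hE' hcard ↦ ?_
  rw [Fintype.card_fin] at hcard
  obtain ⟨v, hv⟩ := hyp E' hE' hcard
  obtain ⟨w, hw⟩ := exists_booster_of_degree_lt le_sup_left (by convert hv)
  exact ⟨v, w, hw⟩

/-- Lemma 3.4: if some `Γ ⊆ G - H` has enough boosters surviving in `G - H` at every
stage, then `G - H` is Hamiltonian. -/
theorem stmt5 {n : ℕ} (G H Γ : SimpleGraph (Fin n)) (hH : H ≤ G) (hΓ : Γ ≤ G \ H)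
    (hyp : ∀ E' : Finset (Sym2 (Fin n)),
      (E' : Set (Sym2 (Fin n))) ⊆ ((G \ H) \ Γ).edgeSet → E'.card ≤ n →
      ∃ v : Fin n, H.degree v <
        (((G \ (Γ ⊔ fromEdgeSet (E' : Set (Sym2 (Fin n))))).neighborFinset v) ∩
          boosterSet (Γ ⊔ fromEdgeSet (E' : Set (Sym2 (Fin n)))) v).card) :
    (G \ H).IsHamiltonian :=
  stmt5_general G H Γ hΓ hyp
end

section
/- For every fixed β with 0 < β ≤ 1/81 there exists an integer n₀ = n₀(β) > 0 such that for every n ≥ n₀, every graph G ∈ 𝓛(n,β) is connected. -/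
open Filter Finset SimpleGraph
open scoped Classical

/-!
A connected component `S` of the expander `G[V₁]` has no external neighbours, so expansion
forces `|S| > β n₁`. A subset `U ⊆ S` of size `⌊β n₁⌋` then has its `≥ (2/(3β))|U|` neighbours
inside `S`, giving `|S| > n₁ / 2`; two components cannot both be that large, so `G[V₁]` is
connected, and every vertex of `D` has a neighbour in it. Here `n₁ ≥ n - n^{0.09} ≥ n / 2`.
-/

section Expander

variable {V : Type*} [Fintype V] {H : SimpleGraph V}

lemma card_add_card_extNbhd_le {U S : Finset V} (hUS : U ⊆ S) (hS : extNbhd H S = ∅) :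
    U.card + (extNbhd H U).card ≤ S.card := by
  have hsub : extNbhd H U ⊆ S := by
    intro v hv
    simp only [extNbhd, mem_filter, mem_univ, true_and] at hv
    obtain ⟨-, u, hu, hadj⟩ := hv
    by_contra hvS
    have : v ∈ extNbhd H S := by
      simp only [extNbhd, mem_filter, mem_univ, true_and]
      exact ⟨hvS, u, hUS hu, hadj⟩
    simp [hS] at this
  have hdisj : Disjoint U (extNbhd H U) := by
    rw [Finset.disjoint_right]
    intro v hv
    exact (mem_filter.1 hv).2.1
  rw [← card_union_of_disjoint hdisj]
  exact card_le_card (union_subset hUS hsub)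

lemma extNbhd_filter_reachable_eq_empty (u : V) :
    extNbhd H (univ.filter (H.Reachable u)) = ∅ := by
  rw [eq_empty_iff_forall_notMem]
  intro x hx
  simp only [extNbhd, mem_filter, mem_univ, true_and] at hx
  obtain ⟨hxn, y, hy, hadj⟩ := hx
  exact hxn (hy.trans hadj.reachable)

lemma preconnected_of_forall_extNbhd_eq_empty
    (h : ∀ S : Finset V, S.Nonempty → extNbhd H S = ∅ → Fintype.card V < 2 * S.card) :
    H.Preconnected := by
  intro u v
  by_contra huv
  let Su := univ.filter (H.Reachable u)
  let Sv := univ.filter (H.Reachable v)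
  have hu := h Su ⟨u, by simp [Su]⟩ (extNbhd_filter_reachable_eq_empty u)
  have hv := h Sv ⟨v, by simp [Sv]⟩ (extNbhd_filter_reachable_eq_empty v)
  have hdisj : Disjoint Su Sv := by
    rw [Finset.disjoint_left]
    intro x hx hx'
    simp only [Su, Sv, mem_filter, mem_univ, true_and] at hx hx'
    exact huv (hx.trans hx'.symm)
  have : Su.card + Sv.card ≤ Fintype.card V := by
    rw [← card_union_of_disjoint hdisj]
    exact card_le_univ _
  omega

lemma IsExpander.lt_card_of_extNbhd_eq_empty {R : ℝ} {f : ℕ → ℝ} (hexp : IsExpander H R f)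
    (hf : ∀ t, 0 < f t) {S : Finset V} (hS : S.Nonempty) (hcl : extNbhd H S = ∅) :
    R < S.card := by
  by_contra! hle
  have h := hexp S hS hle
  rw [hcl, card_empty, Nat.cast_zero] at h
  have hc : (0 : ℝ) < S.card := by exact_mod_cast hS.card_pos
  nlinarith [hf S.card]

lemma fBeta_pos {β : ℝ} (hβ : 0 < β) {n1 : ℕ} (hn1 : 1 < n1) (t : ℕ) : 0 < fBeta β n1 t := by
  unfold fBeta
  split_ifs
  · positivity
  · exact Real.rpow_pos_of_pos (Real.log_pos (by exact_mod_cast hn1)) _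
  · norm_num

lemma IsExpander.lt_two_mul_card_of_extNbhd_eq_empty {β : ℝ} (hβ : 0 < β) {n1 : ℕ}
    (hn1 : 1 < n1) (hβn1 : 4 < β * n1) (hexp : IsExpander H (β * n1) (fBeta β n1))
    {S : Finset V} (hS : S.Nonempty) (hcl : extNbhd H S = ∅) : n1 < 2 * S.card := by
  have hbig := hexp.lt_card_of_extNbhd_eq_empty (fBeta_pos hβ hn1) hS hcl
  set k := ⌊β * (n1 : ℝ)⌋₊
  have hk_le : (k : ℝ) ≤ β * n1 := Nat.floor_le (by positivity)
  have hk_gt : β * n1 - 1 < k := Nat.sub_one_lt_floor _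
  obtain ⟨U, hUS, hUcard⟩ := exists_subset_card_eq (s := S) (n := k) (by
    exact_mod_cast hk_le.trans hbig.le)
  have hUne : U.Nonempty := by
    rw [← card_pos, hUcard]
    exact_mod_cast (show (0 : ℝ) < k by linarith)
  have hexpU := hexp U hUne (by rw [hUcard]; exact hk_le)
  rw [hUcard, fBeta, if_pos rfl] at hexpU
  have hsum : (k : ℝ) + (extNbhd H U).card ≤ S.card := by
    exact_mod_cast hUcard ▸ card_add_card_extNbhd_le hUS hcl
  -- `f_β(⌊βn₁⌋) ≥ 2/(3β)` is all the expansion the count needs.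
  have hnbhd : 2 * (k : ℝ) ≤ 3 * β * (extNbhd H U).card := by
    have : 2 * (1 + 39 * β) / (3 * β) * (3 * β) = 2 + 78 * β := by field_simp; ring
    nlinarith
  have : (n1 : ℝ) < 2 * S.card := by nlinarith
  exact_mod_cast this

end Expander

lemma rpow_le_half_of_four_le {x : ℝ} (hx : 4 ≤ x) {p : ℝ} (hp : p ≤ 1 / 2) :
    x ^ p ≤ x / 2 := by
  calc x ^ p ≤ x ^ (1 / 2 : ℝ) := Real.rpow_le_rpow_of_exponent_le (by linarith) hp
    _ = Real.sqrt x := (Real.sqrt_eq_rpow x).symm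
    _ ≤ x / 2 := Real.sqrt_le_iff.2 ⟨by linarith, by nlinarith⟩

lemma SimpleGraph.connected_of_induce_preconnected {V : Type*} [Nonempty V] {G : SimpleGraph V}
    {s : Set V} (hs : (G.induce s).Preconnected) (hreach : ∀ x, ∃ y ∈ s, G.Reachable x y) :
    G.Connected := by
  have hs' : ∀ a ∈ s, ∀ b ∈ s, G.Reachable a b := fun a ha b hb => by
    simpa using (hs ⟨a, ha⟩ ⟨b, hb⟩).map (Embedding.induce s).toHom
  refine ⟨fun a b => ?_⟩
  obtain ⟨a', ha', hra⟩ := hreach a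
  obtain ⟨b', hb', hrb⟩ := hreach b
  exact (hra.trans (hs' a' ha' b' hb')).trans hrb.symm

lemma InFamilyL.connected {n : ℕ} {β : ℝ} {G : SimpleGraph (Fin n)} {V1 D : Finset (Fin n)}
    (h : InFamilyL n β G V1 D) (hβ : 0 < β) (hn : 4 ≤ n) (hβn : 8 < β * n) : G.Connected := by
  obtain ⟨hdisj, hunion, hD, hD2, -, -, hexp⟩ := h
  have hcard : (V1.card : ℝ) + D.card = n := by
    exact_mod_cast (card_union_of_disjoint hdisj).symm.trans (by simp [hunion])
  have hn' : (4 : ℝ) ≤ n := by exact_mod_cast hn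
  have hDn : (D.card : ℝ) ≤ n / 2 :=
    hD.trans (rpow_le_half_of_four_le hn' (by norm_num))
  have hV1 : 1 < V1.card := by exact_mod_cast (show (1 : ℝ) < V1.card by linarith)
  have hpre : (G.induce (V1 : Set (Fin n))).Preconnected :=
    preconnected_of_forall_extNbhd_eq_empty fun S hS hcl => by
      simpa using hexp.lt_two_mul_card_of_extNbhd_eq_empty hβ hV1 (by nlinarith) hS hcl
  have : Nonempty (Fin n) := ⟨⟨0, by omega⟩⟩
  refine connected_of_induce_preconnected hpre fun x => ?_
  rcases mem_union.1 (hunion ▸ mem_univ x : x ∈ V1 ∪ D) with hx | hx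
  · exact ⟨x, hx, .refl x⟩
  · have hxV1 : 0 < (G.neighborFinset x ∩ V1).card := by have := hD2 x hx; omega
    obtain ⟨y, hy⟩ := card_pos.1 hxV1
    rw [mem_inter, mem_neighborFinset] at hy
    exact ⟨y, hy.2, hy.1.reachable⟩

theorem stmt7_general (β : ℝ) (hβ0 : 0 < β) :
    ∃ n0 : ℕ, 0 < n0 ∧ ∀ n : ℕ, n0 ≤ n → ∀ G : SimpleGraph (Fin n),
      ∀ V1 D : Finset (Fin n), InFamilyL n β G V1 D → G.Connected := by
  obtain ⟨m, hm⟩ : ∃ m : ℕ, 8 / β < m := exists_nat_gt _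
  refine ⟨max 4 m, by omega, fun n hn G V1 D hG => hG.connected hβ0 (le_of_max_le_left hn) ?_⟩
  have : 8 / β < n := hm.trans_le (by exact_mod_cast le_of_max_le_right hn)
  rwa [div_lt_iff₀ hβ0, mul_comm] at this

/-- (From the proof of Lemma 3.6): for fixed `0 < β ≤ 1/81` and `n` large, every graph
in `𝓛(n, β)` is connected. -/
theorem stmt7 (β : ℝ) (hβ0 : 0 < β) (hβ : β ≤ 1 / 81) :
    ∃ n0 : ℕ, 0 < n0 ∧ ∀ n : ℕ, n0 ≤ n → ∀ G : SimpleGraph (Fin n),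
      ∀ V1 D : Finset (Fin n), InFamilyL n β G V1 D → G.Connected :=
  stmt7_general β hβ0
end

section
/- If the edge-probability function satisfies p(n) ≥ ln n / n and t = t(n) is a function with t(n) ≤ n·p(n)/100, then with high probability a graph G sampled from G(n,p) satisfies |D_t(G)| ≤ n^{0.09}, where D_t(G) = {v : d_G(v) < t} is the set of vertices of degree less than t. -/
open Filter Finset SimpleGraph
open scoped Classical

/-- The set `D_t(G)` of vertices of degree less than `t`. -/
noncomputable def lowDegSet (n : ℕ) (t : ℝ) (G : SimpleGraph (Fin n)) : Finset (Fin n) :=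
  Finset.univ.filter (fun v => (G.degree v : ℝ) < t)

/-! Markov's inequality reduces the claim to `𝔼|D_t(G)| = o(n^{0.09})`. By linearity,
`𝔼|D_t(G)| = n · ℙ(d(v) < t)`, and `d(v) ~ Bin(n - 1, p)`. The exponential-moment bound
`ℙ(d(v) < t) ≤ e^{kt} 𝔼[e^{-k d(v)}] = e^{kt} (1 - p(1 - e^{-k}))^{n-1}
  ≤ e^{kt - (1 - e^{-k}) p (n-1)}`
with `k = 4`, together with `t ≤ np/100`, `e^{-4} < 1/50` and `np ≥ ln n`, gives
`ℙ(d(v) < t) ≤ e · n^{-0.94}`, hence `ℙ(|D_t(G)| > n^{0.09}) ≤ e · n^{-0.03} → 0`. -/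

open Real

lemma Finset.sum_powerset_pow_card_filter_mul {ι : Type*} (E : Finset ι) (P : ι → Prop)
    [DecidablePred P] (p x : ℝ) :
    ∑ s ∈ E.powerset, x ^ #{e ∈ s | P e} * (p ^ #s * (1 - p) ^ (#E - #s))
      = (p * x + 1 - p) ^ #{e ∈ E | P e} := by
  -- expand `∏ e ∈ E, (p * x ^ [P e] + (1 - p))` over the subsets of `E`
  have key := Finset.prod_add (fun e => p * if P e then x else 1) (fun _ => 1 - p) E
  have hlhs : ∀ e, (p * (if P e then x else 1) + (1 - p)) = if P e then p * x + 1 - p else 1 := by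
    intro e; split_ifs <;> ring
  simp only [hlhs, Finset.prod_ite, Finset.prod_const, one_pow, mul_one,
    Finset.prod_mul_distrib] at key
  rw [key]
  refine Finset.sum_congr rfl fun s hs => ?_
  rw [Finset.card_sdiff_of_subset (Finset.mem_powerset.1 hs)]
  ring

lemma SimpleGraph.sum_eq_sum_powerset_edgeFinset_top {V : Type*} [Fintype V] [DecidableEq V]
    (F : Finset (Sym2 V) → ℝ) :
    ∑ G : SimpleGraph V, F G.edgeFinset
      = ∑ s ∈ (⊤ : SimpleGraph V).edgeFinset.powerset, F s := by
  refine Finset.sum_nbij' (fun G => G.edgeFinset) (fun s => fromEdgeSet s)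
    (fun G _ => Finset.mem_powerset.2 (edgeFinset_mono le_top)) (by simp) (by simp) ?_ (by simp)
  intro s hs
  apply Finset.coe_injective
  rw [coe_edgeFinset, edgeSet_fromEdgeSet, sdiff_eq_left, Set.disjoint_left]
  intro e hes hd
  simpa [hd] using Finset.mem_powerset.1 hs hes

noncomputable def gnpExpect (n : ℕ) (p : ℝ) (X : SimpleGraph (Fin n) → ℝ) : ℝ :=
  ∑ G : SimpleGraph (Fin n), X G * gnpWeight n p G

section GnpModel

variable {n : ℕ} {p : ℝ}

lemma gnpWeight_nonneg (hp0 : 0 ≤ p) (hp1 : p ≤ 1) (G : SimpleGraph (Fin n)) :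
    0 ≤ gnpWeight n p G := by
  have := sub_nonneg.2 hp1
  unfold gnpWeight
  positivity

lemma gnpExpect_const_mul (c : ℝ) (X : SimpleGraph (Fin n) → ℝ) :
    gnpExpect n p (fun G => c * X G) = c * gnpExpect n p X := by
  simp only [gnpExpect, Finset.mul_sum, mul_assoc]

lemma gnpExpect_pow_card_filter_edgeFinset (P : Sym2 (Fin n) → Prop) [DecidablePred P] (x : ℝ) :
    gnpExpect n p (fun G => x ^ #{e ∈ G.edgeFinset | P e})
      = (p * x + 1 - p) ^ #{e ∈ (⊤ : SimpleGraph (Fin n)).edgeFinset | P e} := by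
  have hE : n.choose 2 = #(⊤ : SimpleGraph (Fin n)).edgeFinset := by
    rw [card_edgeFinset_top_eq_card_choose_two, Fintype.card_fin]
  rw [← Finset.sum_powerset_pow_card_filter_mul, ← sum_eq_sum_powerset_edgeFinset_top fun s =>
    x ^ #{e ∈ s | P e} * (p ^ #s * (1 - p) ^ (#(⊤ : SimpleGraph (Fin n)).edgeFinset - #s))]
  simp only [gnpExpect, gnpWeight, hE]

lemma sum_gnpWeight : ∑ G : SimpleGraph (Fin n), gnpWeight n p G = 1 := by
  simpa [gnpExpect] using gnpExpect_pow_card_filter_edgeFinset (p := p) (fun _ => True) 1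

lemma gnpProb_not (A : SimpleGraph (Fin n) → Prop) :
    gnpProb n p (fun G => ¬ A G) = 1 - gnpProb n p A := by
  rw [eq_sub_iff_add_eq, gnpProb, gnpProb, ← Finset.sum_add_distrib, ← sum_gnpWeight (p := p)]
  refine Finset.sum_congr rfl fun G _ => ?_
  by_cases hA : A G <;> simp [hA]

lemma gnpProb_nonneg (hp0 : 0 ≤ p) (hp1 : p ≤ 1) (A : SimpleGraph (Fin n) → Prop) :
    0 ≤ gnpProb n p A :=
  Finset.sum_nonneg fun G _ => by
    split_ifs
    exacts [gnpWeight_nonneg hp0 hp1 G, le_rfl]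

lemma gnpProb_le_gnpExpect (hp0 : 0 ≤ p) (hp1 : p ≤ 1) {A : SimpleGraph (Fin n) → Prop}
    {X : SimpleGraph (Fin n) → ℝ} (hX : ∀ G, 0 ≤ X G) (hAX : ∀ G, A G → 1 ≤ X G) :
    gnpProb n p A ≤ gnpExpect n p X := by
  refine Finset.sum_le_sum fun G _ => ?_
  have hw := gnpWeight_nonneg hp0 hp1 G
  split_ifs with hA
  · exact le_mul_of_one_le_left hw (hAX G hA)
  · exact mul_nonneg (hX G) hw

lemma gnpExpect_pow_degree (v : Fin n) (x : ℝ) :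
    gnpExpect n p (fun G => x ^ G.degree v) = (p * x + 1 - p) ^ (n - 1) := by
  have hdeg : ∀ G : SimpleGraph (Fin n), G.degree v = #{e ∈ G.edgeFinset | v ∈ e} := by
    intro G
    rw [← card_incidenceFinset_eq_degree, incidenceFinset_eq_filter]
  simp only [hdeg]
  rw [gnpExpect_pow_card_filter_edgeFinset, ← incidenceFinset_eq_filter,
    card_incidenceFinset_eq_degree, complete_graph_degree, Fintype.card_fin]

lemma gnpProb_degree_lt_le (hp0 : 0 ≤ p) (hp1 : p ≤ 1) (v : Fin n) (t : ℝ) {k : ℝ}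
    (hk : 0 ≤ k) :
    gnpProb n p (fun G => (G.degree v : ℝ) < t)
      ≤ exp (k * t - (1 - exp (-k)) * p * (n - 1 : ℕ)) := by
  have hbase : 0 ≤ p * exp (-k) + 1 - p := by nlinarith [exp_pos (-k)]
  calc gnpProb n p (fun G => (G.degree v : ℝ) < t)
      ≤ gnpExpect n p (fun G => exp (k * t) * exp (-k) ^ G.degree v) := by
        refine gnpProb_le_gnpExpect hp0 hp1 (fun G => by positivity) fun G hG => ?_
        rw [← exp_nat_mul, ← exp_add]
        exact one_le_exp (by nlinarith)
    _ = exp (k * t) * (p * exp (-k) + 1 - p) ^ (n - 1) := by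
        rw [gnpExpect_const_mul, gnpExpect_pow_degree]
    _ ≤ exp (k * t) * exp (-(1 - exp (-k)) * p) ^ (n - 1) := by
        gcongr
        linarith [add_one_le_exp (-(1 - exp (-k)) * p)]
    _ = exp (k * t - (1 - exp (-k)) * p * (n - 1 : ℕ)) := by
        rw [← exp_nat_mul, ← exp_add]
        ring_nf

lemma gnpExpect_card_lowDegSet (t : ℝ) :
    gnpExpect n p (fun G => #(lowDegSet n t G))
      = ∑ v : Fin n, gnpProb n p (fun G => (G.degree v : ℝ) < t) := by
  simp only [gnpExpect, gnpProb, lowDegSet, Finset.card_filter, Nat.cast_sum, Nat.cast_ite,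
    Nat.cast_one, Nat.cast_zero, Finset.sum_mul, ite_mul, one_mul, zero_mul]
  exact Finset.sum_comm

end GnpModel

lemma exp_neg_four_lt : exp (-4) < 1 / 50 := by
  rw [exp_neg, one_div, inv_lt_inv₀ (exp_pos 4) (by norm_num)]
  have he := exp_one_gt_d9
  calc (50 : ℝ) < 2.7182818283 ^ 4 := by norm_num
    _ < exp 1 ^ 4 := by gcongr
    _ = exp 4 := by rw [← exp_nat_mul]; norm_num

lemma tendsto_exp_sub_mul_log_natCast (a : ℝ) {c : ℝ} (hc : 0 < c) :
    Tendsto (fun n : ℕ => exp (a - c * log n)) atTop (nhds 0) := by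
  have hlog : Tendsto (fun n : ℕ => c * log n) atTop atTop :=
    (tendsto_log_atTop.comp tendsto_natCast_atTop_atTop).const_mul_atTop hc
  exact tendsto_exp_atBot.comp
    (tendsto_atBot_add_const_left _ a (tendsto_neg_atTop_atBot.comp hlog))

lemma gnpProb_card_lowDegSet_gt_le {n : ℕ} {p t : ℝ} (hn : 1 ≤ n) (hp0 : 0 ≤ p)
    (hp1 : p ≤ 1) (hlog : log n ≤ n * p) (ht : t ≤ n * p / 100) :
    gnpProb n p (fun G => (n : ℝ) ^ (0.09 : ℝ) < #(lowDegSet n t G))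
      ≤ exp (1 - 0.03 * log n) := by
  have hn0 : (0 : ℝ) < n := by exact_mod_cast hn
  have ha : 0 < (n : ℝ) ^ (0.09 : ℝ) := by positivity
  have hexponent : 4 * t - (1 - exp (-4)) * p * (n - 1 : ℕ) ≤ 1 - 0.94 * log n := by
    rw [Nat.cast_sub hn, Nat.cast_one]
    nlinarith [exp_neg_four_lt, exp_pos (-4), mul_nonneg hp0 hn0.le]
  have hexpect : gnpExpect n p (fun G => #(lowDegSet n t G)) ≤ n * exp (1 - 0.94 * log n) := by
    rw [gnpExpect_card_lowDegSet]
    calc ∑ v : Fin n, gnpProb n p (fun G => (G.degree v : ℝ) < t)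
        ≤ ∑ _v : Fin n, exp (1 - 0.94 * log n) := Finset.sum_le_sum fun v _ =>
          (gnpProb_degree_lt_le hp0 hp1 v t (by norm_num)).trans (exp_le_exp.2 hexponent)
      _ = n * exp (1 - 0.94 * log n) := by simp
  calc gnpProb n p (fun G => (n : ℝ) ^ (0.09 : ℝ) < #(lowDegSet n t G))
      ≤ gnpExpect n p (fun G => ((n : ℝ) ^ (0.09 : ℝ))⁻¹ * #(lowDegSet n t G)) :=
        gnpProb_le_gnpExpect hp0 hp1 (fun G => by positivity)
          fun G hG => (one_le_inv_mul₀ ha).2 hG.le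
    _ ≤ ((n : ℝ) ^ (0.09 : ℝ))⁻¹ * (n * exp (1 - 0.94 * log n)) := by
        rw [gnpExpect_const_mul]
        gcongr
    _ = exp (-(log n * 0.09)) * (exp (log n) * exp (1 - 0.94 * log n)) := by
        rw [rpow_def_of_pos hn0, exp_neg, exp_log hn0]
    _ = exp (1 - 0.03 * log n) := by
        rw [← exp_add, ← exp_add]
        ring_nf

/-- Claim 4.3: for `p ≥ ln n / n` and `t ≤ np/100`, w.h.p. `|D_t(G)| ≤ n^{0.09}`. -/
theorem stmt9 (p : ℕ → ℝ) (t : ℕ → ℝ) (hp0 : ∀ n, 0 ≤ p n) (hp1 : ∀ n, p n ≤ 1)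
    (hp : ∀ n : ℕ, Real.log n / n ≤ p n) (ht : ∀ n : ℕ, t n ≤ n * p n / 100) :
    WHP p (fun n G => ((lowDegSet n (t n) G).card : ℝ) ≤ (n : ℝ) ^ (0.09 : ℝ)) := by
  have hbad : Tendsto (fun n => gnpProb n (p n)
      (fun G => (n : ℝ) ^ (0.09 : ℝ) < #(lowDegSet n (t n) G))) atTop (nhds 0) := by
    refine squeeze_zero' (Eventually.of_forall fun n => gnpProb_nonneg (hp0 n) (hp1 n) _) ?_
      (tendsto_exp_sub_mul_log_natCast 1 (by norm_num : (0 : ℝ) < 0.03))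
    filter_upwards [eventually_ge_atTop 1] with n hn
    have hlog : log n ≤ n * p n := (div_le_iff₀' (by positivity)).1 (hp n)
    exact gnpProb_card_lowDegSet_gt_le hn (hp0 n) (hp1 n) hlog (ht n)
  simpa only [WHP, ← not_lt, gnpProb_not, sub_zero] using hbad.const_sub 1
end
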